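/- arXiv:2406.07574 — 4 statements merged into one kernel-verified Lean document; each statement's English description precedes it below -/
import Mathlib

section
/- For any edge e of a weighted graph, w_e \cdot B_e^2 equals the diagonal entry (L^{down})^+_{ee} of the pseudoinverse of the down Laplacian, which also equals the squared norm of the row of \tilde\partial^+ corresponding to e. -/
open Matrix BigOperators

/-- Uniqueness of the Moore–Penrose pseudoinverse. -/
theorem mp_unique {m n : Type*} [Fintype m] [Fintype n]
    (A : Matrix m n ℝ) (P Q : Matrix n m ℝ)
    (hP1 : A * P * A = A) (hP2 : P * A * P = P)
    (hP3 : (A * P)ᵀ = A * P) (hP4 : (P * A)ᵀ = P * A)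
    (hQ1 : A * Q * A = A) (hQ2 : Q * A * Q = Q)
    (hQ3 : (A * Q)ᵀ = A * Q) (hQ4 : (Q * A)ᵀ = Q * A) :
    P = Q := by
  have hAP : A * P = A * Q := by
    have e1 : A * P = (A * Q) * (A * P) := by
      conv_lhs => rw [← hQ1]
      rw [Matrix.mul_assoc]
    have e3 : (A * P) * (A * Q) = A * Q := by
      rw [← Matrix.mul_assoc, hP1]
    calc A * P = (A * Q) * (A * P) := e1
      _ = ((A * P)ᵀ * (A * Q)ᵀ)ᵀ := by rw [← Matrix.transpose_mul, Matrix.transpose_transpose]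
      _ = ((A * P) * (A * Q))ᵀ := by rw [hP3, hQ3]
      _ = (A * Q)ᵀ := by rw [e3]
      _ = A * Q := hQ3
  have hPA : P * A = Q * A := by
    have e1 : P * A = (P * A) * (Q * A) := by
      conv_lhs => rw [← hQ1]
      simp only [Matrix.mul_assoc]
    have e3 : (Q * A) * (P * A) = Q * A := by
      rw [Matrix.mul_assoc, ← Matrix.mul_assoc A P A, hP1]
    calc P * A = (P * A) * (Q * A) := e1
      _ = ((Q * A)ᵀ * (P * A)ᵀ)ᵀ := by rw [← Matrix.transpose_mul, Matrix.transpose_transpose]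
      _ = ((Q * A) * (P * A))ᵀ := by rw [hP4, hQ4]
      _ = (Q * A)ᵀ := by rw [e3]
      _ = Q * A := hQ4
  calc P = P * A * P := hP2.symm
    _ = P * (A * Q) := by rw [Matrix.mul_assoc, hAP]
    _ = (P * A) * Q := by rw [Matrix.mul_assoc]
    _ = (Q * A) * Q := by rw [hPA]
    _ = Q := hQ2

/-- w_e·B_e² = (L^down)⁺_ee = ‖row e of ∂̃⁺‖², where ∂̃ = ∂W^(1/2)
and L^down = ∂̃ᵀ∂̃. All pseudoinverses are specified by Moore–Penrose conditions. -/
theorem biharmonic_edge_eq_down_laplacian_diagonal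
    {V E : Type*} [Fintype V] [DecidableEq V] [Fintype E] [DecidableEq E]
    (vsrc vtgt : E → V) (w : E → ℝ) (hw : ∀ e, 0 < w e)
    (Bd : Matrix V E ℝ)
    (hBd : Bd = fun v e => (if v = vsrc e then (1:ℝ) else 0) - (if v = vtgt e then 1 else 0))
    (L : Matrix V V ℝ) (hLdef : L = Bd * Matrix.diagonal w * Bdᵀ)
    (hconn : ∀ x : V → ℝ, L *ᵥ x = 0 → ∃ c : ℝ, x = Function.const V c)
    (Lp : Matrix V V ℝ)
    (hp1 : L * Lp * L = L) (hp2 : Lp * L * Lp = Lp)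
    (hp3 : (L * Lp)ᵀ = L * Lp) (hp4 : (Lp * L)ᵀ = Lp * L)
    (tB : Matrix V E ℝ) (htB : tB = Bd * Matrix.diagonal (fun e => Real.sqrt (w e)))
    (Ldown : Matrix E E ℝ) (hLdown : Ldown = tBᵀ * tB)
    (Ldp : Matrix E E ℝ)
    (hd1 : Ldown * Ldp * Ldown = Ldown) (hd2 : Ldp * Ldown * Ldp = Ldp)
    (hd3 : (Ldown * Ldp)ᵀ = Ldown * Ldp) (hd4 : (Ldp * Ldown)ᵀ = Ldp * Ldown)
    (tBp : Matrix E V ℝ)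
    (hb1 : tB * tBp * tB = tB) (hb2 : tBp * tB * tBp = tBp)
    (hb3 : (tB * tBp)ᵀ = tB * tBp) (hb4 : (tBp * tB)ᵀ = tBp * tB)
    (e0 : E) :
    w e0 * ((Pi.single (vsrc e0) 1 - Pi.single (vtgt e0) 1) ⬝ᵥ ((Lp * Lp) *ᵥ (Pi.single (vsrc e0) 1 - Pi.single (vtgt e0) 1))) = Ldp e0 e0 ∧
    Ldp e0 e0 = ∑ v : V, tBp e0 v ^ 2 := by
  -- L is symmetric
  have hLsymm : Lᵀ = L := by
    rw [hLdef]
    simp [Matrix.transpose_mul, Matrix.diagonal_transpose, Matrix.mul_assoc]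
  -- L = tB * tBᵀ
  have hdd : Matrix.diagonal w =
      (Matrix.diagonal fun e => Real.sqrt (w e)) * (Matrix.diagonal fun e => Real.sqrt (w e)) := by
    have h : (fun e => Real.sqrt (w e) * Real.sqrt (w e)) = w :=
      funext fun e => Real.mul_self_sqrt (hw e).le
    rw [Matrix.diagonal_mul_diagonal, h]
  have hLtB : L = tB * tBᵀ := by
    rw [hLdef, htB, Matrix.transpose_mul, Matrix.diagonal_transpose, hdd]
    simp only [Matrix.mul_assoc]
  -- Lp is symmetric
  have hLpsymm : Lpᵀ = Lp := by
    apply mp_unique L Lpᵀ Lp _ _ _ _ hp1 hp2 hp3 hp4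
    · have := congrArg Matrix.transpose hp1
      simpa [Matrix.transpose_mul, hLsymm, Matrix.mul_assoc] using this
    · have := congrArg Matrix.transpose hp2
      simpa [Matrix.transpose_mul, hLsymm, Matrix.mul_assoc] using this
    · have h : L * Lpᵀ = Lp * L := by
        calc L * Lpᵀ = (Lp * Lᵀ)ᵀ := by
              rw [Matrix.transpose_mul, Matrix.transpose_transpose]
          _ = (Lp * L)ᵀ := by rw [hLsymm]
          _ = Lp * L := hp4
      rw [h]; exact hp4
    · have h : Lpᵀ * L = L * Lp := by
        calc Lpᵀ * L = (Lᵀ * Lp)ᵀ := by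
              rw [Matrix.transpose_mul, Matrix.transpose_transpose]
          _ = (L * Lp)ᵀ := by rw [hLsymm]
          _ = L * Lp := hp3
      rw [h]; exact hp3
  -- L * Lp * tB = tB
  have hLLptB : L * Lp * tB = tB := by
    set N : Matrix V E ℝ := L * Lp * tB - tB with hN
    have hNtB : N * tBᵀ = 0 := by
      rw [hN, Matrix.sub_mul, Matrix.mul_assoc, ← hLtB, hp1, sub_self]
    have hNN : N * Nᵀ = 0 := by
      have hNT : Nᵀ = tBᵀ * (L * Lp)ᵀ - tBᵀ := by
        rw [hN, Matrix.transpose_sub, Matrix.transpose_mul]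
      rw [hNT, Matrix.mul_sub, ← Matrix.mul_assoc, hNtB, Matrix.zero_mul, sub_self]
    have : N = 0 := by
      have := (Matrix.self_mul_conjTranspose_eq_zero (A := N)).mp ?_
      · exact this
      · rwa [Matrix.conjTranspose_eq_transpose_of_trivial]
    have := sub_eq_zero.mp this
    exact this
  -- tBp = tBᵀ * Lp
  have htBp : tBp = tBᵀ * Lp := by
    apply mp_unique tB tBp (tBᵀ * Lp) hb1 hb2 hb3 hb4
    · rw [← Matrix.mul_assoc, ← hLtB, hLLptB]
    · calc tBᵀ * Lp * tB * (tBᵀ * Lp)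
          = tBᵀ * (Lp * (tB * tBᵀ) * Lp) := by simp only [Matrix.mul_assoc]
        _ = tBᵀ * (Lp * L * Lp) := by rw [← hLtB]
        _ = tBᵀ * Lp := by rw [hp2]
    · have h : tB * (tBᵀ * Lp) = L * Lp := by
        rw [← Matrix.mul_assoc, ← hLtB]
      rw [h]; exact hp3
    · calc (tBᵀ * Lp * tB)ᵀ = tBᵀ * (Lpᵀ * tB) := by
            simp only [Matrix.transpose_mul, Matrix.transpose_transpose, Matrix.mul_assoc]
        _ = tBᵀ * Lp * tB := by rw [hLpsymm, Matrix.mul_assoc]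
  -- Ldp = tBp * tBpᵀ
  have k1 : tBpᵀ * tBᵀ = tB * tBp := by rw [← Matrix.transpose_mul]; exact hb3
  have k2 : tBᵀ * tBpᵀ = tBp * tB := by rw [← Matrix.transpose_mul]; exact hb4
  have H2 : ∀ (X : Matrix V E ℝ), tBp * (tB * (tBp * X)) = tBp * X := by
    intro X
    rw [← Matrix.mul_assoc, ← Matrix.mul_assoc, hb2]
  have hLdp : Ldp = tBp * tBpᵀ := by
    apply mp_unique Ldown Ldp (tBp * tBpᵀ) hd1 hd2 hd3 hd4
    · calc Ldown * (tBp * tBpᵀ) * Ldown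
          = tBᵀ * (tB * (tBp * (tBpᵀ * (tBᵀ * tB)))) := by
            rw [hLdown]; simp only [Matrix.mul_assoc]
        _ = tBᵀ * (tB * (tBp * (tB * tBp * tB))) := by
            rw [← Matrix.mul_assoc tBpᵀ tBᵀ tB, k1]
        _ = tBᵀ * (tB * (tBp * tB)) := by rw [hb1]
        _ = tBᵀ * (tB * tBp * tB) := by rw [← Matrix.mul_assoc tB tBp tB]
        _ = tBᵀ * tB := by rw [hb1]
        _ = Ldown := hLdown.symm
    · calc tBp * tBpᵀ * Ldown * (tBp * tBpᵀ)
          = tBp * (tBpᵀ * (tBᵀ * (tB * (tBp * tBpᵀ)))) := by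
            rw [hLdown]; simp only [Matrix.mul_assoc]
        _ = tBp * ((tBpᵀ * tBᵀ) * (tB * (tBp * tBpᵀ))) := by
            rw [← Matrix.mul_assoc tBpᵀ tBᵀ]
        _ = tBp * (tB * (tBp * (tB * (tBp * tBpᵀ)))) := by
            rw [k1]; simp only [Matrix.mul_assoc]
        _ = tBp * (tB * (tBp * tBpᵀ)) := by rw [H2]
        _ = tBp * tBpᵀ := by rw [H2]
    · have h : Ldown * (tBp * tBpᵀ) = tBp * tB := by
        calc Ldown * (tBp * tBpᵀ)
            = tBᵀ * ((tB * tBp) * tBpᵀ) := by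
              rw [hLdown]; simp only [Matrix.mul_assoc]
          _ = tBᵀ * ((tBpᵀ * tBᵀ) * tBpᵀ) := by rw [k1]
          _ = (tBᵀ * tBpᵀ) * (tBᵀ * tBpᵀ) := by simp only [Matrix.mul_assoc]
          _ = (tBp * tB) * (tBp * tB) := by rw [k2]
          _ = tBp * (tB * tBp * tB) := by
              simp only [Matrix.mul_assoc]
          _ = tBp * tB := by rw [hb1]
      rw [h]; exact hb4
    · have h : (tBp * tBpᵀ) * Ldown = tBp * tB := by
        calc (tBp * tBpᵀ) * Ldown
            = tBp * ((tBpᵀ * tBᵀ) * tB) := by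
              rw [hLdown]; simp only [Matrix.mul_assoc]
          _ = tBp * (tB * tBp * tB) := by rw [k1]
          _ = tBp * tB := by rw [hb1]
      rw [h]; exact hb4
  constructor
  · -- first equality
    have hLdp2 : Ldp = tBᵀ * ((Lp * Lp) * tB) := by
      rw [hLdp, htBp, Matrix.transpose_mul, Matrix.transpose_transpose, hLpsymm]
      simp only [Matrix.mul_assoc]
    set x : V → ℝ := Pi.single (vsrc e0) 1 - Pi.single (vtgt e0) 1 with hx
    have hcol : ∀ v, tB v e0 = Real.sqrt (w e0) * x v := by
      intro v
      rw [htB, Matrix.mul_diagonal, hBd, hx]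
      simp [Pi.single_apply, mul_comm]
    have key : Ldp e0 e0 = (fun v => tB v e0) ⬝ᵥ ((Lp * Lp) *ᵥ fun v => tB v e0) := by
      rw [hLdp2]
      simp [Matrix.mul_apply, Matrix.mulVec, dotProduct]
    have hcolf : (fun v => tB v e0) = Real.sqrt (w e0) • x := by
      funext v; simpa using hcol v
    rw [key, hcolf, Matrix.mulVec_smul, smul_dotProduct, dotProduct_smul,
      smul_eq_mul, smul_eq_mul, ← mul_assoc, Real.mul_self_sqrt (hw e0).le]
  · -- second equality
    rw [hLdp]
    simp [Matrix.mul_apply, sq]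
end

section
/- If e is a cut edge of a connected unweighted graph whose removal separates the vertex set into components S and T, then B_e^2 = |S||T|/n, the inverse isoperimetric ratio of S. -/
/-!
The centred indicator `x = 1_S - (|S|/n) 1` of the cut changes by exactly `1` across `e` and by
`0` across every other edge, so `L x = Bd Bdᵀ x = 1_s - 1_t`. Since `x` is orthogonal to the
constants, which span `ker L`, the pseudoinverse sends `1_s - 1_t` back to `x`; as `L⁺` is
symmetric, `B_e² = ‖L⁺ (1_s - 1_t)‖² = ‖x‖² = |S| |V ∖ S| / n`.
-/

open Matrix BigOperators

namespace Matrix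

/-- The Penrose equations, stated with the transpose (the real case). -/
structure IsMoorePenroseInverse {m n R : Type*} [Fintype m] [Fintype n] [CommSemiring R]
    (A : Matrix m n R) (X : Matrix n m R) : Prop where
  mul_inv_mul : A * X * A = A
  inv_mul_inv : X * A * X = X
  isSymm_mul_inv : (A * X).IsSymm
  isSymm_inv_mul : (X * A).IsSymm

namespace IsMoorePenroseInverse

section Rectangular

variable {m n R : Type*} [Fintype m] [Fintype n] [CommSemiring R]
  {A : Matrix m n R} {X Y : Matrix n m R}

theorem transpose (hX : IsMoorePenroseInverse A X) : IsMoorePenroseInverse Aᵀ Xᵀ where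
  mul_inv_mul := by simpa [Matrix.mul_assoc] using congrArg Matrix.transpose hX.mul_inv_mul
  inv_mul_inv := by simpa [Matrix.mul_assoc] using congrArg Matrix.transpose hX.inv_mul_inv
  isSymm_mul_inv := by rw [← Matrix.transpose_mul]; exact hX.isSymm_inv_mul.transpose
  isSymm_inv_mul := by rw [← Matrix.transpose_mul]; exact hX.isSymm_mul_inv.transpose

/-- Both `X` and `Y` equal `X * A * Y`. -/
theorem eq (hX : IsMoorePenroseInverse A X) (hY : IsMoorePenroseInverse A Y) : X = Y :=
  calc X = X * A * X := hX.inv_mul_inv.symm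
    _ = X * (A * X)ᵀ := by rw [hX.isSymm_mul_inv.eq, Matrix.mul_assoc]
    _ = X * (A * Y * (A * X))ᵀ := by rw [← Matrix.mul_assoc, hY.mul_inv_mul]
    _ = X * A * X * A * Y := by
      rw [Matrix.transpose_mul, hX.isSymm_mul_inv.eq, hY.isSymm_mul_inv.eq]
      simp only [Matrix.mul_assoc]
    _ = X * A * (Y * A * Y) := by rw [hX.inv_mul_inv, hY.inv_mul_inv]
    _ = (Y * A * (X * A))ᵀ * Y := by
      rw [Matrix.transpose_mul, hX.isSymm_inv_mul.eq, hY.isSymm_inv_mul.eq]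
      simp only [Matrix.mul_assoc]
    _ = (Y * A)ᵀ * Y := by
      rw [← Matrix.mul_assoc, Matrix.mul_assoc Y A X, Matrix.mul_assoc Y, hX.mul_inv_mul]
    _ = Y := by rw [hY.isSymm_inv_mul.eq, hY.inv_mul_inv]

end Rectangular

section Square

variable {n R : Type*} [Fintype n] {A X : Matrix n n R}

theorem isSymm [CommSemiring R] (hX : IsMoorePenroseInverse A X) (hA : A.IsSymm) : X.IsSymm :=
  (hA.eq ▸ hX.transpose).eq hX

/-- `X * A` is the orthogonal projection onto `(ker A)ᗮ`, here the vectors summing to zero. -/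
theorem mulVec_mulVec_of_sum_eq_zero [Nonempty n] [Field R] [CharZero R]
    (hX : IsMoorePenroseInverse A X) (hA : A *ᵥ 1 = 0)
    (hker : ∀ x, A *ᵥ x = 0 → ∃ c : R, x = Function.const n c)
    {x : n → R} (hx : ∑ i, x i = 0) : X *ᵥ A *ᵥ x = x := by
  obtain ⟨c, hc⟩ := hker (X *ᵥ A *ᵥ x - x) (by
    rw [mulVec_sub, mulVec_mulVec, mulVec_mulVec, hX.mul_inv_mul, sub_self])
  have hXAx : ∑ i, (X *ᵥ A *ᵥ x) i = 0 := by
    rw [← one_dotProduct, mulVec_mulVec, dotProduct_mulVec, ← mulVec_transpose,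
      hX.isSymm_inv_mul.eq, ← mulVec_mulVec, hA, mulVec_zero, zero_dotProduct]
  have hc0 : c = 0 := by
    have hsum := congrArg (∑ i, · i) hc
    simp only [Pi.sub_apply, Finset.sum_sub_distrib, hXAx, hx, sub_self, Function.const_apply,
      Finset.sum_const, Finset.card_univ, nsmul_eq_mul] at hsum
    simpa using hsum.symm
  rw [← sub_eq_zero, hc, hc0]
  rfl

end Square

end IsMoorePenroseInverse

end Matrix

section Incidence

variable {V E : Type*} [DecidableEq V]

def incidenceMatrix (R : Type*) [Ring R] (src tgt : E → V) : Matrix V E R :=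
  fun v e => (if v = src e then 1 else 0) - (if v = tgt e then 1 else 0)

variable {R : Type*} [Ring R] (src tgt : E → V)

theorem incidenceMatrix_transpose_mulVec_apply [Fintype V] (x : V → R) (e : E) :
    ((incidenceMatrix R src tgt)ᵀ *ᵥ x) e = x (src e) - x (tgt e) := by
  simp [incidenceMatrix, mulVec, dotProduct, sub_mul]

theorem incidenceMatrix_transpose_mulVec_const [Fintype V] (c : R) :
    (incidenceMatrix R src tgt)ᵀ *ᵥ Function.const V c = 0 := by
  ext e
  simp [incidenceMatrix_transpose_mulVec_apply]

theorem incidenceMatrix_mulVec_single [Fintype E] [DecidableEq E] (e : E) :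
    incidenceMatrix R src tgt *ᵥ Pi.single e 1 = Pi.single (src e) 1 - Pi.single (tgt e) 1 := by
  ext v
  simp [incidenceMatrix, Pi.single_apply]

end Incidence

section CenteredIndicator

variable {V : Type*} [Fintype V] [DecidableEq V] (R : Type*) [Field R] (S : Finset V)

def centeredIndicator : V → R := fun v => (if v ∈ S then 1 else 0) - S.card / Fintype.card V

theorem sum_centeredIndicator [CharZero R] : ∑ v, centeredIndicator R S v = 0 := by
  rcases isEmpty_or_nonempty V with hV | hV
  · simp
  · have hcard : (Fintype.card V : R) ≠ 0 := Nat.cast_ne_zero.mpr Fintype.card_ne_zero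
    simp [centeredIndicator, Finset.sum_sub_distrib, mul_div_cancel₀ _ hcard]

theorem centeredIndicator_dotProduct_self [CharZero R] :
    centeredIndicator R S ⬝ᵥ centeredIndicator R S = S.card * Sᶜ.card / Fintype.card V := by
  rcases isEmpty_or_nonempty V with hV | hV
  · simp
  have hcard : (S.card + Sᶜ.card : R) = Fintype.card V := by exact_mod_cast S.card_add_card_compl
  have hS : ∀ v ∈ S, centeredIndicator R S v * centeredIndicator R S v
      = (1 - S.card / Fintype.card V) ^ 2 := by
    intro v hv; simp [centeredIndicator, hv, sq]
  have hSc : ∀ v ∈ Sᶜ, centeredIndicator R S v * centeredIndicator R S v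
      = (S.card / Fintype.card V) ^ 2 := by
    intro v hv; simp [centeredIndicator, Finset.mem_compl.mp hv, sq]
  rw [dotProduct, ← S.sum_add_sum_compl, Finset.sum_congr rfl hS, Finset.sum_congr rfl hSc,
    Finset.sum_const, Finset.sum_const, nsmul_eq_mul, nsmul_eq_mul, ← hcard]
  have hn : (S.card + Sᶜ.card : R) ≠ 0 := hcard ▸ Nat.cast_ne_zero.mpr Fintype.card_ne_zero
  field_simp
  ring

variable {R S}

theorem incidenceMatrix_transpose_mulVec_centeredIndicator {E : Type*} [DecidableEq E]
    {src tgt : E → V} {e₀ : E} (hs : src e₀ ∈ S) (ht : tgt e₀ ∉ S)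
    (hcut : ∀ e, e ≠ e₀ → (src e ∈ S ↔ tgt e ∈ S)) :
    (incidenceMatrix R src tgt)ᵀ *ᵥ centeredIndicator R S = Pi.single e₀ 1 := by
  ext e
  rw [incidenceMatrix_transpose_mulVec_apply]
  by_cases he : e = e₀
  · subst he
    simp [centeredIndicator, hs, ht]
  · simp [centeredIndicator, Pi.single_eq_of_ne he, hcut e he]

end CenteredIndicator

theorem biharmonic_of_cut_edge_general
    {V E : Type*} [Fintype V] [DecidableEq V] [Fintype E]
    (vsrc vtgt : E → V)
    (Bd : Matrix V E ℝ)
    (hBd : Bd = fun v e => (if v = vsrc e then (1:ℝ) else 0) - (if v = vtgt e then 1 else 0))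
    (L : Matrix V V ℝ) (hLdef : L = Bd * Bdᵀ)
    (hconn : ∀ x : V → ℝ, L *ᵥ x = 0 → ∃ c : ℝ, x = Function.const V c)
    (Lp : Matrix V V ℝ)
    (hp1 : L * Lp * L = L) (hp2 : Lp * L * Lp = Lp)
    (hp3 : (L * Lp)ᵀ = L * Lp) (hp4 : (Lp * L)ᵀ = Lp * L)
    (e0 : E) (S : Finset V)
    (hsS : vsrc e0 ∈ S) (htS : vtgt e0 ∉ S)
    (hcut : ∀ e : E, e ≠ e0 → (vsrc e ∈ S ↔ vtgt e ∈ S))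
 :
    (Pi.single (vsrc e0) 1 - Pi.single (vtgt e0) 1) ⬝ᵥ ((Lp * Lp) *ᵥ (Pi.single (vsrc e0) 1 - Pi.single (vtgt e0) 1))
      = ((S.card : ℝ) * (Sᶜ.card : ℝ)) / (Fintype.card V : ℝ) := by
  classical
  have : Nonempty V := ⟨vsrc e0⟩
  have hB : Bd = incidenceMatrix ℝ vsrc vtgt := hBd
  have hLp : IsMoorePenroseInverse L Lp := ⟨hp1, hp2, hp3, hp4⟩
  have hL : L.IsSymm := by rw [hLdef, IsSymm, transpose_mul, transpose_transpose]
  have hL1 : L *ᵥ 1 = 0 := by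
    rw [hLdef, ← mulVec_mulVec, hB, ← Function.const_one,
      incidenceMatrix_transpose_mulVec_const, mulVec_zero]
  set δ : V → ℝ := Pi.single (vsrc e0) 1 - Pi.single (vtgt e0) 1
  have hLx : L *ᵥ centeredIndicator ℝ S = δ := by
    rw [hLdef, ← mulVec_mulVec, hB,
      incidenceMatrix_transpose_mulVec_centeredIndicator hsS htS hcut,
      incidenceMatrix_mulVec_single]
  have hLpδ : Lp *ᵥ δ = centeredIndicator ℝ S := by
    rw [← hLx, hLp.mulVec_mulVec_of_sum_eq_zero hL1 hconn (sum_centeredIndicator ℝ S)]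
  calc δ ⬝ᵥ (Lp * Lp) *ᵥ δ = (Lp *ᵥ δ) ⬝ᵥ (Lp *ᵥ δ) := by
        rw [← mulVec_mulVec, dotProduct_mulVec, ← mulVec_transpose, (hLp.isSymm hL).eq]
    _ = _ := by rw [hLpδ, centeredIndicator_dotProduct_self]

/-- For a cut edge e of a connected unweighted graph whose removal
separates the vertices into S and its complement, B_e² = |S|·|V∖S|/n. -/
theorem biharmonic_of_cut_edge
    {V E : Type*} [Fintype V] [DecidableEq V] [Fintype E] [DecidableEq E]
    (vsrc vtgt : E → V) (hsimple : ∀ e, vsrc e ≠ vtgt e)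
    (Bd : Matrix V E ℝ)
    (hBd : Bd = fun v e => (if v = vsrc e then (1:ℝ) else 0) - (if v = vtgt e then 1 else 0))
    (L : Matrix V V ℝ) (hLdef : L = Bd * Bdᵀ)
    (hconn : ∀ x : V → ℝ, L *ᵥ x = 0 → ∃ c : ℝ, x = Function.const V c)
    (Lp : Matrix V V ℝ)
    (hp1 : L * Lp * L = L) (hp2 : Lp * L * Lp = Lp)
    (hp3 : (L * Lp)ᵀ = L * Lp) (hp4 : (Lp * L)ᵀ = Lp * L)
    (e0 : E) (S : Finset V)
    (hsS : vsrc e0 ∈ S) (htS : vtgt e0 ∉ S)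
    (hcut : ∀ e : E, e ≠ e0 → (vsrc e ∈ S ↔ vtgt e ∈ S))
 :
    (Pi.single (vsrc e0) 1 - Pi.single (vtgt e0) 1) ⬝ᵥ ((Lp * Lp) *ᵥ (Pi.single (vsrc e0) 1 - Pi.single (vtgt e0) 1))
      = ((S.card : ℝ) * (Sᶜ.card : ℝ)) / (Fintype.card V : ℝ) :=
  biharmonic_of_cut_edge_general vsrc vtgt Bd hBd L hLdef hconn Lp hp1 hp2 hp3 hp4 e0 S hsS htS hcut
end

section
/- For a connected unweighted graph with n vertices and any edge e, B_e^2 \leq n. -/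
/-!
Put `χ = 1_s - 1_t` and `x = L⁺ χ`, so that `B_e² = ‖x‖²`. Since `ker L` is spanned by `1` and
`χ ⊥ 1`, `L x = χ`; moreover `x ⊥ 1`. The maximum principle for `L x = χ` puts every `x v` between
`x t` and `x s`, and the gap `x s - x t = χ ⬝ x = ∑_f (x (src f) - x (tgt f))²` is the effective
resistance of `e`; as it dominates its own square, it is at most `1`. A mean-zero vector whose
entries lie in an interval of length at most `1` has entries of absolute value at most `1`.
-/

open Matrix

theorem sum_sq_le_card_mul_sq_of_sum_eq_zero {ι : Type*} [Fintype ι] {f : ι → ℝ} {a b : ℝ}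
    (hf : ∀ i, f i ∈ Set.Icc a b) (hsum : ∑ i, f i = 0) :
    ∑ i, f i ^ 2 ≤ Fintype.card ι * (b - a) ^ 2 := by
  have hbound : ∀ i, f i ^ 2 ≤ (b - a) ^ 2 := fun i => by
    have ha : a ≤ 0 := by
      by_contra! h
      linarith [Finset.sum_pos (fun j _ => h.trans_le (hf j).1) ⟨i, Finset.mem_univ i⟩]
    have hb : 0 ≤ b := by
      by_contra! h
      linarith [Finset.sum_neg (fun j _ => (hf j).2.trans_lt h) ⟨i, Finset.mem_univ i⟩]
    nlinarith [(hf i).1, (hf i).2]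
  simpa using Finset.sum_le_sum fun i (_ : i ∈ Finset.univ) => hbound i

section PseudoInverse

variable {n R : Type*} [Fintype n] [CommRing R] {L Lp : Matrix n n R}

theorem pinv_mul_comm (hL : Lᵀ = L) (hp1 : L * Lp * L = L)
    (hp3 : (L * Lp)ᵀ = L * Lp) (hp4 : (Lp * L)ᵀ = Lp * L) : Lp * L = L * Lp := by
  have h3 : Lpᵀ * L = L * Lp := by rw [← hp3, transpose_mul, hL]
  have h4 : L * Lpᵀ = Lp * L := by rw [← hp4, transpose_mul, hL]
  calc Lp * L = L * Lpᵀ := h4.symm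
    _ = L * Lp * (L * Lpᵀ) := by rw [← mul_assoc, hp1]
    _ = Lpᵀ * L * (Lp * L) := by rw [h3, h4]
    _ = Lpᵀ * (L * Lp * L) := by simp only [mul_assoc]
    _ = L * Lp := by rw [hp1, h3]

theorem pinv_transpose (hL : Lᵀ = L) (hp1 : L * Lp * L = L) (hp2 : Lp * L * Lp = Lp)
    (hp3 : (L * Lp)ᵀ = L * Lp) (hp4 : (Lp * L)ᵀ = Lp * L) : Lpᵀ = Lp := by
  have hcomm := pinv_mul_comm hL hp1 hp3 hp4
  have h3 : Lpᵀ * L = L * Lp := by rw [← hp3, transpose_mul, hL]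
  have h4 : L * Lpᵀ = Lp * L := by rw [← hp4, transpose_mul, hL]
  calc Lpᵀ = Lpᵀ * (L * Lpᵀ) := by conv_lhs => rw [← hp2, transpose_mul, transpose_mul, hL]
    _ = Lpᵀ * L * Lp := by rw [h4, hcomm, mul_assoc]
    _ = Lp := by rw [h3, ← hcomm, hp2]

theorem pinv_mulVec_eq_zero (hp2 : Lp * L * Lp = Lp) (hcomm : Lp * L = L * Lp) {v : n → R}
    (hv : L *ᵥ v = 0) : Lp *ᵥ v = 0 := by
  rw [← hp2, mul_assoc, ← hcomm, ← mulVec_mulVec, ← mulVec_mulVec, hv, mulVec_zero, mulVec_zero]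

theorem mulVec_sub_mulVec_pinv_mulVec (hp1 : L * Lp * L = L) (hcomm : Lp * L = L * Lp)
    (v : n → R) : L *ᵥ (v - L *ᵥ (Lp *ᵥ v)) = 0 := by
  rw [mulVec_sub, mulVec_mulVec, mulVec_mulVec, mul_assoc, ← hcomm, ← mul_assoc, hp1, sub_self]

end PseudoInverse

section EdgeLaplacian

variable {V E : Type*} [DecidableEq V] (src tgt : E → V)

def signedIncidence : Matrix V E ℝ :=
  Matrix.of fun v e => (if v = src e then (1 : ℝ) else 0) - (if v = tgt e then 1 else 0)

theorem signedIncidence_transpose_mulVec [Fintype V] (x : V → ℝ) (e : E) :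
    ((signedIncidence src tgt)ᵀ *ᵥ x) e = x (src e) - x (tgt e) := by
  simp [signedIncidence, mulVec, dotProduct, sub_mul]

variable [Fintype E]

def edgeLaplacian : Matrix V V ℝ := signedIncidence src tgt * (signedIncidence src tgt)ᵀ

theorem edgeLaplacian_transpose : (edgeLaplacian src tgt)ᵀ = edgeLaplacian src tgt := by
  rw [edgeLaplacian, transpose_mul, transpose_transpose]

variable [Fintype V]

theorem dotProduct_edgeLaplacian_mulVec (y x : V → ℝ) :
    y ⬝ᵥ (edgeLaplacian src tgt *ᵥ x) =
      ∑ e, (y (src e) - y (tgt e)) * (x (src e) - x (tgt e)) := by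
  rw [edgeLaplacian, ← mulVec_mulVec, dotProduct_mulVec, ← mulVec_transpose]
  simp only [dotProduct, signedIncidence_transpose_mulVec]

theorem edgeLaplacian_mulVec_eq_zero {y : V → ℝ} (hy : ∀ e, y (src e) = y (tgt e)) :
    edgeLaplacian src tgt *ᵥ y = 0 := by
  have hBy : (signedIncidence src tgt)ᵀ *ᵥ y = 0 :=
    funext fun e => by rw [signedIncidence_transpose_mulVec, hy, sub_self, Pi.zero_apply]
  rw [edgeLaplacian, ← mulVec_mulVec, hBy, mulVec_zero]

theorem sum_edgeLaplacian_mulVec (x : V → ℝ) : ∑ v, (edgeLaplacian src tgt *ᵥ x) v = 0 := by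
  simpa [one_dotProduct] using dotProduct_edgeLaplacian_mulVec src tgt 1 x

variable {src tgt}

theorem sub_le_one_of_edgeLaplacian_mulVec_eq {x : V → ℝ} (e₀ : E)
    (hx : edgeLaplacian src tgt *ᵥ x = Pi.single (src e₀) 1 - Pi.single (tgt e₀) 1) :
    x (src e₀) - x (tgt e₀) ≤ 1 := by
  have henergy := dotProduct_edgeLaplacian_mulVec src tgt x x
  rw [hx, dotProduct_sub, dotProduct_single, dotProduct_single, mul_one, mul_one] at henergy
  have hsq : (x (src e₀) - x (tgt e₀)) * (x (src e₀) - x (tgt e₀)) ≤ x (src e₀) - x (tgt e₀) :=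
    henergy ▸ Finset.single_le_sum (fun e _ => mul_self_nonneg (x (src e) - x (tgt e)))
      (Finset.mem_univ e₀)
  nlinarith

variable (hconn : ∀ x : V → ℝ, edgeLaplacian src tgt *ᵥ x = 0 → ∃ c : ℝ, x = Function.const V c)
include hconn

theorem le_of_edgeLaplacian_mulVec_eq {s t : V} {x : V → ℝ}
    (hx : edgeLaplacian src tgt *ᵥ x = Pi.single s 1 - Pi.single t 1) (v : V) : x v ≤ x s := by
  by_contra! hlt
  have : Nonempty V := ⟨v⟩
  obtain ⟨w, hw⟩ := Finite.exists_max x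
  -- Pair `L x = χ` with `f ∘ x`, the indicator of `{x = max x}`, which misses `s`: every edge
  -- term is `≥ 0` while their sum is `-f (x t) ≤ 0`, so `f ∘ x` is constant along edges.
  set f : ℝ → ℝ := fun r => if x w ≤ r then 1 else 0
  have hf : Monotone f := fun a b hab => by
    simp only [f]; split_ifs <;> linarith
  have hterm : ∀ e, 0 ≤ (f (x (src e)) - f (x (tgt e))) * (x (src e) - x (tgt e)) :=
    fun e => (hf.monovary monotone_id).sub_mul_sub_nonneg (x (tgt e)) (x (src e))
  have hfs : f (x s) = 0 := if_neg (not_le.2 (hlt.trans_le (hw v)))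
  have hft : 0 ≤ f (x t) := by simp only [f]; split_ifs <;> norm_num
  have henergy := dotProduct_edgeLaplacian_mulVec src tgt (fun v => f (x v)) x
  rw [hx, dotProduct_sub, dotProduct_single, dotProduct_single, hfs] at henergy
  have hzero : ∀ e, (f (x (src e)) - f (x (tgt e))) * (x (src e) - x (tgt e)) = 0 := by
    refine fun e => (Finset.sum_eq_zero_iff_of_nonneg fun e _ => hterm e).1
      (le_antisymm ?_ (Finset.sum_nonneg fun e _ => hterm e)) e (Finset.mem_univ e)
    rw [← henergy]
    linarith
  have hflat : ∀ e, f (x (src e)) = f (x (tgt e)) := fun e => by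
    rcases mul_eq_zero.1 (hzero e) with h | h
    · exact sub_eq_zero.1 h
    · rw [sub_eq_zero.1 h]
  obtain ⟨c, hc⟩ := hconn _ (edgeLaplacian_mulVec_eq_zero src tgt (y := fun v => f (x v)) hflat)
  have hw1 : c = 1 := by simpa [f] using (congrFun hc w).symm
  have hs0 : c = 0 := by simpa [hfs] using (congrFun hc s).symm
  exact one_ne_zero (hw1.symm.trans hs0)

theorem edgeLaplacian_mulVec_pinv_mulVec {Lp : Matrix V V ℝ}
    (hp1 : edgeLaplacian src tgt * Lp * edgeLaplacian src tgt = edgeLaplacian src tgt)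
    (hcomm : Lp * edgeLaplacian src tgt = edgeLaplacian src tgt * Lp)
    {χ : V → ℝ} (hχ : ∑ v, χ v = 0) : edgeLaplacian src tgt *ᵥ (Lp *ᵥ χ) = χ := by
  obtain ⟨c, hc⟩ := hconn _ (mulVec_sub_mulVec_pinv_mulVec hp1 hcomm χ)
  have hsum := congrArg (fun y : V → ℝ => ∑ v, y v) hc
  simp only [Pi.sub_apply, Finset.sum_sub_distrib, hχ, sum_edgeLaplacian_mulVec, sub_zero,
    Function.const_apply, Finset.sum_const, Finset.card_univ, nsmul_eq_mul] at hsum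
  refine (sub_eq_zero.1 (hc.trans (funext fun v => ?_))).symm
  have : Nonempty V := ⟨v⟩
  exact (mul_eq_zero.1 hsum.symm).resolve_left (Nat.cast_ne_zero.2 Fintype.card_ne_zero)

end EdgeLaplacian

theorem biharmonic_edge_upper_bound_general
    {V E : Type*} [Fintype V] [DecidableEq V] [Fintype E]
    (vsrc vtgt : E → V)
    (Bd : Matrix V E ℝ)
    (hBd : Bd = fun v e => (if v = vsrc e then (1:ℝ) else 0) - (if v = vtgt e then 1 else 0))
    (L : Matrix V V ℝ) (hLdef : L = Bd * Bdᵀ)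
    (hconn : ∀ x : V → ℝ, L *ᵥ x = 0 → ∃ c : ℝ, x = Function.const V c)
    (Lp : Matrix V V ℝ)
    (hp1 : L * Lp * L = L) (hp2 : Lp * L * Lp = Lp)
    (hp3 : (L * Lp)ᵀ = L * Lp) (hp4 : (Lp * L)ᵀ = Lp * L)
    (e0 : E) :
    (Pi.single (vsrc e0) 1 - Pi.single (vtgt e0) 1) ⬝ᵥ ((Lp * Lp) *ᵥ (Pi.single (vsrc e0) 1 - Pi.single (vtgt e0) 1)) ≤ (Fintype.card V : ℝ) := by
  obtain rfl : L = edgeLaplacian vsrc vtgt := by rw [hLdef, hBd]; rfl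
  have hcomm := pinv_mul_comm (edgeLaplacian_transpose vsrc vtgt) hp1 hp3 hp4
  have hLp := pinv_transpose (edgeLaplacian_transpose vsrc vtgt) hp1 hp2 hp3 hp4
  set χ : V → ℝ := Pi.single (vsrc e0) 1 - Pi.single (vtgt e0) 1
  set x := Lp *ᵥ χ
  have hx : edgeLaplacian vsrc vtgt *ᵥ x = χ :=
    edgeLaplacian_mulVec_pinv_mulVec hconn hp1 hcomm (by simp [χ, Finset.sum_sub_distrib])
  have hmax : ∀ v, x v ≤ x (vsrc e0) := le_of_edgeLaplacian_mulVec_eq hconn hx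
  have hmin : ∀ v, x (vtgt e0) ≤ x v := fun v => neg_le_neg_iff.1 <|
    le_of_edgeLaplacian_mulVec_eq hconn (x := -x) (by rw [mulVec_neg, hx, neg_sub]) v
  have hsum : ∑ v, x v = 0 := by
    have hLp1 : Lp *ᵥ 1 = 0 :=
      pinv_mulVec_eq_zero hp2 hcomm (edgeLaplacian_mulVec_eq_zero vsrc vtgt fun _ => rfl)
    rw [← one_dotProduct, dotProduct_mulVec, ← mulVec_transpose, hLp, hLp1, zero_dotProduct]
  have hgap := sub_le_one_of_edgeLaplacian_mulVec_eq e0 hx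
  calc χ ⬝ᵥ ((Lp * Lp) *ᵥ χ) = ∑ v, x v ^ 2 := by
        rw [← mulVec_mulVec, dotProduct_mulVec, ← mulVec_transpose, hLp]
        exact (Finset.sum_congr rfl fun v _ => sq (x v)).symm
    _ ≤ Fintype.card V * (x (vsrc e0) - x (vtgt e0)) ^ 2 :=
        sum_sq_le_card_mul_sq_of_sum_eq_zero (fun v => ⟨hmin v, hmax v⟩) hsum
    _ ≤ Fintype.card V :=
        mul_le_of_le_one_right (Nat.cast_nonneg _) (pow_le_one₀ (sub_nonneg.2 (hmin _)) hgap)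

/-- For any edge e of a connected unweighted graph, B_e² ≤ n. -/
theorem biharmonic_edge_upper_bound
    {V E : Type*} [Fintype V] [DecidableEq V] [Fintype E] [DecidableEq E]
    (vsrc vtgt : E → V) (hsimple : ∀ e, vsrc e ≠ vtgt e)
    (Bd : Matrix V E ℝ)
    (hBd : Bd = fun v e => (if v = vsrc e then (1:ℝ) else 0) - (if v = vtgt e then 1 else 0))
    (L : Matrix V V ℝ) (hLdef : L = Bd * Bdᵀ)
    (hconn : ∀ x : V → ℝ, L *ᵥ x = 0 → ∃ c : ℝ, x = Function.const V c)
    (Lp : Matrix V V ℝ)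
    (hp1 : L * Lp * L = L) (hp2 : Lp * L * Lp = Lp)
    (hp3 : (L * Lp)ᵀ = L * Lp) (hp4 : (Lp * L)ᵀ = Lp * L)
    (e0 : E) :
    (Pi.single (vsrc e0) 1 - Pi.single (vtgt e0) 1) ⬝ᵥ ((Lp * Lp) *ᵥ (Pi.single (vsrc e0) 1 - Pi.single (vtgt e0) 1)) ≤ (Fintype.card V : ℝ) :=
  biharmonic_edge_upper_bound_general vsrc vtgt Bd hBd L hLdef hconn Lp hp1 hp2 hp3 hp4 e0
end

section
/- For a connected weighted graph, any vertices s,t, and any real k: \sum_{e \in E} ((\tilde\partial 1_e)^T (L^+)^k (1_s - 1_t))^2 = (H^{2k-1}_{st})^2. -/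
open Matrix BigOperators

/-- For any vertices s,t and real k,
∑_e ((∂̃1_e)ᵀ (L⁺)ᵏ (1_s-1_t))² = (H^(2k-1)_st)², with (L⁺)ᵏ defined spectrally. -/
theorem kharmonic_sum_over_edges
    {V E : Type*} [Fintype V] [DecidableEq V] [Fintype E] [DecidableEq E]
    (vsrc vtgt : E → V) (w : E → ℝ) (hw : ∀ e, 0 < w e)
    (Bd : Matrix V E ℝ)
    (hBd : Bd = fun v e => (if v = vsrc e then (1:ℝ) else 0) - (if v = vtgt e then 1 else 0))
    (L : Matrix V V ℝ) (hLdef : L = Bd * Matrix.diagonal w * Bdᵀ)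
    (hconn : ∀ x : V → ℝ, L *ᵥ x = 0 → ∃ c : ℝ, x = Function.const V c)
    (U : Matrix V V ℝ) (mu : V → ℝ)
    (hU : Uᵀ * U = 1) (hspec : L = U * Matrix.diagonal mu * Uᵀ)
    (P : ℝ → Matrix V V ℝ)
    (hP : ∀ k : ℝ, P k =
      U * Matrix.diagonal (fun i => if mu i = 0 then 0 else mu i ^ (-k)) * Uᵀ)
    (k : ℝ) (s t : V) :
    ∑ e : E, (((Bd * Matrix.diagonal (fun e => Real.sqrt (w e))) *ᵥ Pi.single e 1) ⬝ᵥ (P k *ᵥ (Pi.single s 1 - Pi.single t 1))) ^ 2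
      = (Pi.single s 1 - Pi.single t 1) ⬝ᵥ (P (2 * k - 1) *ᵥ (Pi.single s 1 - Pi.single t 1)) := by
  set v : V → ℝ := Pi.single s 1 - Pi.single t 1 with hv
  set y : V → ℝ := P k *ᵥ v with hy
  set Bt : Matrix V E ℝ := Bd * Matrix.diagonal (fun e => Real.sqrt (w e)) with hBt
  -- B̃ B̃ᵀ = L
  have hBB : Bt * Btᵀ = L := by
    rw [hBt, hLdef, Matrix.transpose_mul, Matrix.diagonal_transpose]
    rw [Matrix.mul_assoc, Matrix.mul_assoc, ← Matrix.mul_assoc (Matrix.diagonal _),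
      Matrix.diagonal_mul_diagonal]
    have : (fun e => Real.sqrt (w e) * Real.sqrt (w e)) = w :=
      funext fun e => Real.mul_self_sqrt (hw e).le
    rw [this]
  -- L is positive semidefinite
  have hPSD : ∀ x : V → ℝ, 0 ≤ x ⬝ᵥ (L *ᵥ x) := by
    intro x
    have h1 : x ⬝ᵥ (L *ᵥ x) = ∑ e, w e * ((x ᵥ* Bd) e) ^ 2 := by
      rw [hLdef, ← Matrix.mulVec_mulVec, ← Matrix.mulVec_mulVec, Matrix.dotProduct_mulVec,
        Matrix.mulVec_transpose]
      simp only [Matrix.mulVec_diagonal, dotProduct]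
      exact Finset.sum_congr rfl fun e _ => by ring
    rw [h1]
    exact Finset.sum_nonneg fun e _ => mul_nonneg (hw e).le (sq_nonneg _)
  -- eigenvalues are nonnegative
  have hmu : ∀ i, 0 ≤ mu i := by
    intro i
    have hD : Uᵀ * L * U = Matrix.diagonal mu := by
      rw [hspec]
      calc Uᵀ * (U * Matrix.diagonal mu * Uᵀ) * U
          = (Uᵀ * U) * Matrix.diagonal mu * (Uᵀ * U) := by noncomm_ring
        _ = Matrix.diagonal mu := by rw [hU, Matrix.one_mul, Matrix.mul_one]
    have h2 : mu i = (fun j => U j i) ⬝ᵥ (L *ᵥ fun j => U j i) := by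
      have := congrArg (fun M => M i i) hD
      simp only [Matrix.diagonal_apply_eq] at this
      rw [← this]
      simp only [Matrix.mul_apply, Matrix.mulVec, dotProduct, Matrix.transpose_apply,
        Finset.sum_mul, Finset.mul_sum]
      rw [Finset.sum_comm]
      exact Finset.sum_congr rfl fun l _ => Finset.sum_congr rfl fun j _ => by ring
    rw [h2]; exact hPSD _
  -- spectral identity: P k * L * P k = P (2k-1)
  have hPLP : P k * L * P k = P (2 * k - 1) := by
    have hfun : (fun i => (if mu i = 0 then 0 else mu i ^ (-k)) * mu i *
        (if mu i = 0 then (0:ℝ) else mu i ^ (-k)))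
        = fun i => if mu i = 0 then 0 else mu i ^ (-(2*k-1)) := by
      funext i
      by_cases h : mu i = 0
      · simp [h]
      · have hpos : 0 < mu i := lt_of_le_of_ne (hmu i) (Ne.symm h)
        simp only [h, if_false]
        rw [show mu i ^ (-k) * mu i * mu i ^ (-k)
            = mu i ^ (-k) * mu i ^ (1:ℝ) * mu i ^ (-k) by rw [Real.rpow_one],
          ← Real.rpow_add hpos, ← Real.rpow_add hpos]
        congr 1
        ring
    rw [hP k, hP (2*k-1), hspec, ← hfun]
    calc (U * Matrix.diagonal (fun i => if mu i = 0 then 0 else mu i ^ (-k)) * Uᵀ) *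
          (U * Matrix.diagonal mu * Uᵀ) *
          (U * Matrix.diagonal (fun i => if mu i = 0 then 0 else mu i ^ (-k)) * Uᵀ)
        = U * (Matrix.diagonal (fun i => if mu i = 0 then 0 else mu i ^ (-k)) * (Uᵀ * U) *
            Matrix.diagonal mu * (Uᵀ * U) *
            Matrix.diagonal (fun i => if mu i = 0 then 0 else mu i ^ (-k))) * Uᵀ := by
          noncomm_ring
      _ = _ := by
          rw [hU, Matrix.mul_one, Matrix.mul_one, Matrix.diagonal_mul_diagonal,
            Matrix.diagonal_mul_diagonal]
  -- P k is symmetric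
  have hPsym : (P k)ᵀ = P k := by
    rw [hP k]
    simp [Matrix.transpose_mul, Matrix.diagonal_transpose, Matrix.mul_assoc]
  -- each summand is a coordinate of B̃ᵀ y
  have hsum : ∀ e : E, (Bt *ᵥ Pi.single e 1) ⬝ᵥ y = (y ᵥ* Bt) e := by
    intro e
    simp [Matrix.mulVec, Matrix.vecMul, dotProduct, Finset.mul_sum, Pi.single_apply,
      mul_comm]
  calc ∑ e : E, ((Bt *ᵥ Pi.single e 1) ⬝ᵥ y) ^ 2
      = ∑ e : E, (y ᵥ* Bt) e * (y ᵥ* Bt) e := by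
        exact Finset.sum_congr rfl fun e _ => by rw [hsum e]; ring
    _ = (y ᵥ* Bt) ⬝ᵥ (Btᵀ *ᵥ y) := by rw [Matrix.mulVec_transpose]; rfl
    _ = y ⬝ᵥ (L *ᵥ y) := by
        rw [← Matrix.dotProduct_mulVec, Matrix.mulVec_mulVec, hBB]
    _ = (v ᵥ* (P k * (L * P k))) ⬝ᵥ v := by
        rw [hy, Matrix.mulVec_mulVec, Matrix.dotProduct_mulVec, ← Matrix.vecMul_transpose,
          hPsym, Matrix.vecMul_vecMul]
    _ = v ⬝ᵥ (P (2 * k - 1) *ᵥ v) := by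
        rw [← Matrix.mul_assoc, hPLP, ← Matrix.dotProduct_mulVec]
end
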